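/- Let g : [−1,1] → ℝ be a broken solution with eigenvalue 0 satisfying g(−1) = g(1) = 1. Then g(x) = 1 for all x ∈ [−1,1]. -/

import Mathlib

/-! With eigenvalue `0` the equation reads `(e^{2bx} g')' = 0`, so on each half of `[-1,1]` the
derivative `g'` keeps the sign of its one-sided value at `0`, and by the mean value theorem so do
all increments of `g`. Since `B > 0` the two one-sided derivatives at `0` have the same sign `s`,
so `g 0 - g (-1)` and `g 1 - g 0` both have sign `s`; they sum to `0`, hence `s = 0`, and then
`g` is constant on each half. -/

/-- A "broken solution" with eigenvalue `lam` of the ODE `f'' + 2·b·f' = (log q)²·lam·f`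
on `[-1,1]`: `f` is continuous on `[-1,1]`, twice continuously differentiable on
`[-1,0]` and on `[0,1]` (with one-sided derivatives at the endpoints), satisfies the
ODE on `(-1,0) ∪ (0,1)`, and its one-sided derivatives at `0` satisfy
`f'(0-) = B · f'(0+)`. -/
def IsBrokenSolution (q b B lam : ℝ) (f : ℝ → ℝ) : Prop :=
  ContinuousOn f (Set.Icc (-1) 1) ∧
  ContDiffOn ℝ 2 f (Set.Icc (-1) 0) ∧
  ContDiffOn ℝ 2 f (Set.Icc 0 1) ∧
  (∀ x ∈ Set.Ioo (-1 : ℝ) 0 ∪ Set.Ioo (0 : ℝ) 1,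
    deriv (deriv f) x + 2 * b * deriv f x = (Real.log q) ^ 2 * lam * f x) ∧
  derivWithin f (Set.Icc (-1) 0) 0 = B * derivWithin f (Set.Icc 0 1) 0

open Set

section

variable {f g : ℝ → ℝ} {a b c x y : ℝ}

lemma eq_of_continuousOn_Icc_of_hasDerivAt_zero (hf : ContinuousOn f (Icc a c))
    (hf' : ∀ z ∈ Ioo a c, HasDerivAt f 0 z) (hx : x ∈ Icc a c) (hy : y ∈ Icc a c) :
    f x = f y := by
  wlog hxy : x < y generalizing x y
  · rcases (not_lt.mp hxy).eq_or_lt with rfl | hyx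
    · rfl
    · exact (this hy hx hyx).symm
  obtain ⟨ξ, -, hξ⟩ := exists_hasDerivAt_eq_slope f (fun _ => 0) hxy
    (hf.mono (Icc_subset_Icc hx.1 hy.2))
    (fun z hz => hf' z ⟨hx.1.trans_lt hz.1, hz.2.trans_le hy.2⟩)
  rw [eq_comm, div_eq_zero_iff, sub_eq_zero] at hξ
  exact (hξ.resolve_right (sub_ne_zero.mpr hxy.ne')).symm

lemma hasDerivAt_exp_mul_deriv_of_ode (hg : DifferentiableAt ℝ (deriv g) x)
    (hode : deriv (deriv g) x + 2 * b * deriv g x = 0) :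
    HasDerivAt (fun z => Real.exp (2 * b * z) * deriv g z) 0 x := by
  have hexp : HasDerivAt (fun z => Real.exp (2 * b * z)) (Real.exp (2 * b * x) * (2 * b)) x := by
    simpa using ((hasDerivAt_id x).const_mul (2 * b)).exp
  exact (hexp.mul hg.hasDerivAt).congr_deriv
    (by linear_combination Real.exp (2 * b * x) * hode)

lemma exp_mul_derivWithin_eq_of_ode (hac : a < c) (hg : ContDiffOn ℝ 2 g (Icc a c))
    (hode : ∀ z ∈ Ioo a c, deriv (deriv g) z + 2 * b * deriv g z = 0)
    (hx : x ∈ Icc a c) (hy : y ∈ Icc a c) :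
    Real.exp (2 * b * x) * derivWithin g (Icc a c) x
      = Real.exp (2 * b * y) * derivWithin g (Icc a c) y := by
  have hcont : ContinuousOn (fun z => Real.exp (2 * b * z) * derivWithin g (Icc a c) z) (Icc a c) :=
    ContinuousOn.mul (by fun_prop) (hg.continuousOn_derivWithin (uniqueDiffOn_Icc hac) one_le_two)
  refine eq_of_continuousOn_Icc_of_hasDerivAt_zero hcont (fun z hz => ?_) hx hy
  have hg' : DifferentiableAt ℝ (deriv g) z :=
    (((hg.mono Ioo_subset_Icc_self).deriv_of_isOpen isOpen_Ioo le_rfl).differentiableOn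
      one_ne_zero z hz).differentiableAt (isOpen_Ioo.mem_nhds hz)
  refine (hasDerivAt_exp_mul_deriv_of_ode hg' (hode z hz)).congr_of_eventuallyEq ?_
  filter_upwards [isOpen_Ioo.mem_nhds hz] with w hw
  rw [derivWithin_of_mem_nhds (Icc_mem_nhds hw.1 hw.2)]

lemma sign_sub_eq_sign_derivWithin_of_ode (hac : a < c) (hg : ContDiffOn ℝ 2 g (Icc a c))
    (hode : ∀ z ∈ Ioo a c, deriv (deriv g) z + 2 * b * deriv g z = 0)
    (hx : x ∈ Icc a c) (hy : y ∈ Icc a c) (hxy : x < y) {p : ℝ} (hp : p ∈ Icc a c) :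
    SignType.sign (g y - g x) = SignType.sign (derivWithin g (Icc a c) p) := by
  have hxy' : Icc x y ⊆ Icc a c := Icc_subset_Icc hx.1 hy.2
  obtain ⟨ξ, hξ, hslope⟩ := exists_deriv_eq_slope g hxy (hg.continuousOn.mono hxy')
    ((hg.differentiableOn two_ne_zero).mono (Ioo_subset_Icc_self.trans hxy'))
  have hξ' : ξ ∈ Ioo a c := ⟨hx.1.trans_lt hξ.1, hξ.2.trans_le hy.2⟩
  have hfactor := exp_mul_derivWithin_eq_of_ode hac hg hode (Ioo_subset_Icc_self hξ') hp
  rw [derivWithin_of_mem_nhds (Icc_mem_nhds hξ'.1 hξ'.2)] at hfactor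
  have hincr : g y - g x = (y - x) * deriv g ξ := by
    rw [hslope]; field_simp [sub_ne_zero.mpr hxy.ne']
  calc SignType.sign (g y - g x) = SignType.sign (Real.exp (2 * b * ξ) * deriv g ξ) := by
        rw [hincr, sign_mul, sign_mul, sign_pos (sub_pos.mpr hxy), sign_pos (Real.exp_pos _)]
    _ = SignType.sign (derivWithin g (Icc a c) p) := by
        rw [hfactor, sign_mul, sign_pos (Real.exp_pos _), one_mul]

end

theorem brokenSolution_eigenvalue_zero_boundary_one_eq_one_general
    (q b B : ℝ) (hB : 0 < B) (g : ℝ → ℝ)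
    (hg : IsBrokenSolution q b B 0 g) (hg1 : g (-1) = 1) (hg2 : g 1 = 1) :
    ∀ x ∈ Set.Icc (-1 : ℝ) 1, g x = 1 := by
  obtain ⟨-, hL, hR, hode, hjump⟩ := hg
  have hodeL (z) (hz : z ∈ Ioo (-1 : ℝ) 0) : deriv (deriv g) z + 2 * b * deriv g z = 0 := by
    simpa using hode z (Or.inl hz)
  have hodeR (z) (hz : z ∈ Ioo (0 : ℝ) 1) : deriv (deriv g) z + 2 * b * deriv g z = 0 := by
    simpa using hode z (Or.inr hz)
  set s := SignType.sign (derivWithin g (Icc 0 1) 0)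
  have hsignL (x) (hx : x ∈ Ico (-1 : ℝ) 0) : SignType.sign (g 0 - g x) = s := by
    rw [sign_sub_eq_sign_derivWithin_of_ode (by norm_num) hL hodeL (Ico_subset_Icc_self hx)
      (by norm_num) hx.2 (p := 0) (by norm_num), hjump, sign_mul, sign_pos hB, one_mul]
  have hsignR (x) (hx : x ∈ Ioc (0 : ℝ) 1) : SignType.sign (g x - g 0) = s :=
    sign_sub_eq_sign_derivWithin_of_ode (by norm_num) hR hodeR (by norm_num)
      (Ioc_subset_Icc_self hx) hx.1 (by norm_num)
  have hs : s = 0 := by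
    have hleft := hsignL (-1) (by norm_num)
    have hright := hsignR 1 (by norm_num)
    rw [hg1] at hleft
    rw [hg2, ← neg_sub, Left.sign_neg, hleft] at hright
    exact (by decide : ∀ t : SignType, -t = t → t = 0) s hright
  have hconstL (x) (hx : x ∈ Ico (-1 : ℝ) 0) : g x = g 0 :=
    (sub_eq_zero.mp (sign_eq_zero_iff.mp ((hsignL x hx).trans hs))).symm
  have hconstR (x) (hx : x ∈ Ioc (0 : ℝ) 1) : g x = g 0 :=
    sub_eq_zero.mp (sign_eq_zero_iff.mp ((hsignR x hx).trans hs))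
  have hg0 : g 0 = 1 := (hconstL (-1) (by norm_num)).symm.trans hg1
  intro x hx
  rcases lt_trichotomy x 0 with hneg | rfl | hpos
  · rw [hconstL x ⟨hx.1, hneg⟩, hg0]
  · exact hg0
  · rw [hconstR x ⟨hpos, hx.2⟩, hg0]

theorem brokenSolution_eigenvalue_zero_boundary_one_eq_one
    (q b B : ℝ) (hq : 1 < q) (hB : 0 < B) (g : ℝ → ℝ)
    (hg : IsBrokenSolution q b B 0 g) (hg1 : g (-1) = 1) (hg2 : g 1 = 1) :
    ∀ x ∈ Set.Icc (-1 : ℝ) 1, g x = 1 :=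
  brokenSolution_eigenvalue_zero_boundary_one_eq_one_general q b B hB g hg hg1 hg2
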